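/- There exists a constant K ≥ 1 and a neighborhood of the origin in ℝ³ on which the function G(ξ,y,z) = (4 e^{2λy}/λ⁴)[(cosh(λy) - cos(λξ))² + ((sinh(λy)/y)(-ξ+λz) + sin(λξ))²] satisfies K⁻¹ ((ξ² + y²)² + 4z²) ≤ G(ξ,y,z) ≤ K ((ξ² + y²)² + 4z²). -/

import Mathlib

open Real

/-- `sinh(λy)/y`, interpreted by its continuous extension `λ` at `y = 0`. -/
noncomputable def shc (lam y : ℝ) : ℝ := if y = 0 then lam else sinh (lam * y) / y

/-- The function `G(ξ,y,z) = (4 e^{2λy}/λ⁴)[(cosh(λy)-cos(λξ))²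
+ ((sinh(λy)/y)(-ξ+λz) + sin(λξ))²]`. -/
noncomputable def Gfun (lam : ℝ) (p : ℝ × ℝ × ℝ) : ℝ :=
  (4 * exp (2 * lam * p.2.1) / lam ^ 4) *
    ((cosh (lam * p.2.1) - cos (lam * p.1)) ^ 2
      + (shc lam p.2.1 * (-p.1 + lam * p.2.2) + sin (lam * p.1)) ^ 2)

/-!
Put `s = λξ`, `t = λy`, `r = ξ² + y²`. Third-order Taylor bounds show that on `|s|, |t| ≤ 1/6`
the bracket in `G` has the form `A² + (c z + D)²` with `A = cosh t - cos s` comparable to `λ² r`,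
`c = λ sinh(λy)/y` within `λ²/36` of `λ²`, and `D = sin s - ξ sinh(λy)/y = O(|λ|³ |ξ| r)`, so
`|D| ≤ λ² r / 6`. Any such sum is comparable to `λ⁴ (r² + 4 z²)`, and `e^{2t} ∈ [2/3, 3/2]`;
this gives `K = 6` on `|ξ|, |y| < 1/(6|λ|)`, with no condition on `z`.
-/
namespace Real

lemma abs_exp_sub_quadratic_le {x : ℝ} (hx : |x| ≤ 1) :
    |exp x - (1 + x + x ^ 2 / 2)| ≤ 2 / 9 * |x| ^ 3 := by
  have h := exp_bound hx (n := 3) (by norm_num)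
  norm_num [Finset.sum_range_succ, Nat.factorial] at h
  rwa [mul_comm] at h

lemma abs_sinh_sub_self_le {x : ℝ} (hx : |x| ≤ 1) : |sinh x - x| ≤ 2 / 9 * |x| ^ 3 := by
  have hp := abs_le.mp (abs_exp_sub_quadratic_le hx)
  have hn := abs_le.mp (abs_exp_sub_quadratic_le (x := -x) (by rwa [abs_neg]))
  rw [abs_neg, neg_sq] at hn
  rw [sinh_eq, abs_le]
  constructor <;> linarith

lemma abs_cosh_sub_quadratic_le {x : ℝ} (hx : |x| ≤ 1) :
    |cosh x - (1 + x ^ 2 / 2)| ≤ 2 / 9 * |x| ^ 3 := by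
  have hp := abs_le.mp (abs_exp_sub_quadratic_le hx)
  have hn := abs_le.mp (abs_exp_sub_quadratic_le (x := -x) (by rwa [abs_neg]))
  rw [abs_neg, neg_sq] at hn
  rw [cosh_eq, abs_le]
  constructor <;> linarith

lemma exp_mem_Icc_of_abs_le {u : ℝ} (hu : |u| ≤ 1 / 3) : exp u ∈ Set.Icc (2 / 3) (3 / 2) := by
  obtain ⟨hu₁, hu₂⟩ := abs_le.mp hu
  refine ⟨by linarith [add_one_le_exp u], ?_⟩
  have hneg : 2 / 3 ≤ (exp u)⁻¹ := by linarith [exp_neg u ▸ add_one_le_exp (-u)]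
  rw [le_inv_comm₀ (by norm_num) (exp_pos u)] at hneg
  linarith

lemma cosh_sub_cos_bounds {s t : ℝ} (hs : |s| ≤ 1 / 6) (ht : |t| ≤ 1 / 6) :
    (s ^ 2 + t ^ 2) / 3 ≤ cosh t - cos s ∧ cosh t - cos s ≤ 2 / 3 * (s ^ 2 + t ^ 2) := by
  obtain ⟨hcosh₁, hcosh₂⟩ := abs_le.mp (abs_cosh_sub_quadratic_le (x := t) (by linarith))
  obtain ⟨-, hcos⟩ := abs_le.mp (cos_bound (x := s) (by linarith))
  have hcos' := one_sub_sq_div_two_le_cos (x := s)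
  have ht3 : |t| ^ 3 ≤ t ^ 2 / 6 := by
    rw [← sq_abs t]; nlinarith [abs_nonneg t, sq_nonneg |t|]
  have hs4 : |s| ^ 4 ≤ s ^ 2 / 36 := by
    rw [← sq_abs s]; nlinarith [abs_nonneg s, sq_nonneg |s|, pow_nonneg (abs_nonneg s) 3]
  constructor <;> nlinarith

end Real

lemma abs_shc_sub_le (lam : ℝ) {y : ℝ} (hy : |lam * y| ≤ 1) :
    |shc lam y - lam| ≤ |lam| ^ 3 * y ^ 2 := by
  unfold shc
  split_ifs with h
  · simp [h]
  · have hy₀ : 0 < |y| := abs_pos.mpr h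
    rw [show sinh (lam * y) / y - lam = (sinh (lam * y) - lam * y) / y by field_simp,
      abs_div, div_le_iff₀ hy₀]
    calc |sinh (lam * y) - lam * y| ≤ 2 / 9 * |lam * y| ^ 3 := abs_sinh_sub_self_le hy
      _ ≤ |lam| ^ 3 * y ^ 2 * |y| := by
        rw [abs_mul, ← sq_abs y]; nlinarith [pow_nonneg (abs_nonneg lam) 3, pow_nonneg hy₀.le 3]

lemma abs_shc_mul_sub_sq_le {lam y : ℝ} (hy : |lam * y| ≤ 1 / 6) :
    |shc lam y * lam - lam ^ 2| ≤ lam ^ 2 / 36 := by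
  have hy2 : (lam * y) ^ 2 ≤ 1 / 36 := by nlinarith [sq_abs (lam * y), abs_nonneg (lam * y)]
  calc |shc lam y * lam - lam ^ 2| = |shc lam y - lam| * |lam| := by rw [← abs_mul]; ring_nf
    _ ≤ |lam| ^ 3 * y ^ 2 * |lam| := by gcongr; exact abs_shc_sub_le lam (by linarith)
    _ = (lam * y) ^ 2 * lam ^ 2 := by
        rw [mul_comm, ← mul_assoc, ← pow_succ', (by decide : Even 4).pow_abs]; ring
    _ ≤ lam ^ 2 / 36 := by nlinarith [sq_nonneg lam]

lemma sin_sub_shc_mul_sq_le {lam ξ y : ℝ} (hξ : |lam * ξ| ≤ 1 / 6) (hy : |lam * y| ≤ 1) :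
    (sin (lam * ξ) - shc lam y * ξ) ^ 2 ≤ (lam ^ 2 * (ξ ^ 2 + y ^ 2)) ^ 2 / 36 := by
  have hD : |sin (lam * ξ) - shc lam y * ξ| ≤ |lam| ^ 3 * |ξ| * (ξ ^ 2 + y ^ 2) :=
    calc |sin (lam * ξ) - shc lam y * ξ|
        = |(sin (lam * ξ) - lam * ξ) - (shc lam y - lam) * ξ| := by ring_nf
      _ ≤ |lam * ξ| ^ 3 / 6 + |lam| ^ 3 * y ^ 2 * |ξ| := by
        refine (abs_sub _ _).trans (add_le_add ?_ ?_)
        · rw [abs_sub_comm]; exact abs_sub_sin_le _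
        · rw [abs_mul]; gcongr; exact abs_shc_sub_le lam hy
      _ ≤ |lam| ^ 3 * |ξ| * (ξ ^ 2 + y ^ 2) := by
        rw [abs_mul, ← sq_abs ξ]
        nlinarith [pow_nonneg (abs_nonneg lam) 3, pow_nonneg (abs_nonneg ξ) 3, sq_nonneg y]
  have hξ2 : (lam * ξ) ^ 2 ≤ 1 / 36 := by nlinarith [sq_abs (lam * ξ), abs_nonneg (lam * ξ)]
  calc (sin (lam * ξ) - shc lam y * ξ) ^ 2 ≤ (|lam| ^ 3 * |ξ| * (ξ ^ 2 + y ^ 2)) ^ 2 := by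
        rw [← sq_abs]; gcongr
    _ = (lam * ξ) ^ 2 * (lam ^ 2 * (ξ ^ 2 + y ^ 2)) ^ 2 := by
        rw [mul_pow, mul_pow, ← pow_mul, sq_abs, (by decide : Even 6).pow_abs]; ring
    _ ≤ (lam ^ 2 * (ξ ^ 2 + y ^ 2)) ^ 2 / 36 := by
        nlinarith [sq_nonneg (lam ^ 2 * (ξ ^ 2 + y ^ 2))]

lemma sq_add_sq_comparable_of_approx {μ r A c D z : ℝ} (hμ : 0 ≤ μ) (hr : 0 ≤ r)
    (hA₁ : μ * r / 3 ≤ A) (hA₂ : A ≤ 2 / 3 * (μ * r)) (hc : |c - μ| ≤ μ / 36)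
    (hD : D ^ 2 ≤ (μ * r) ^ 2 / 36) :
    μ ^ 2 / 16 * (r ^ 2 + 4 * z ^ 2) ≤ A ^ 2 + (c * z + D) ^ 2 ∧
      A ^ 2 + (c * z + D) ^ 2 ≤ μ ^ 2 * (r ^ 2 + 4 * z ^ 2) := by
  obtain ⟨hc₁, hc₂⟩ := abs_le.mp hc
  have hmr : 0 ≤ μ * r := mul_nonneg hμ hr
  have hA_lo : (μ * r) ^ 2 / 9 ≤ A ^ 2 := by nlinarith
  have hA_hi : A ^ 2 ≤ 4 / 9 * (μ * r) ^ 2 := by nlinarith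
  have hc_lo : (35 / 36 * μ) ^ 2 ≤ c ^ 2 := pow_le_pow_left₀ (by positivity) (by linarith) 2
  have hc_hi : c ^ 2 ≤ (37 / 36 * μ) ^ 2 := pow_le_pow_left₀ (by linarith) (by linarith) 2
  have hz := sq_nonneg z
  constructor
  · nlinarith [sq_nonneg (c * z + 2 * D)]
  · nlinarith [sq_nonneg (c * z - D)]

lemma Gfun_eq (lam ξ y z : ℝ) :
    Gfun lam (ξ, y, z) = 4 * exp (2 * (lam * y)) / (lam ^ 2) ^ 2 *
      ((cosh (lam * y) - cos (lam * ξ)) ^ 2 +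
        (shc lam y * lam * z + (sin (lam * ξ) - shc lam y * ξ)) ^ 2) := by
  simp only [Gfun]; ring_nf

lemma Gfun_comparable_of_abs_mul_le {lam ξ y : ℝ} (hlam : lam ≠ 0) (hξ : |lam * ξ| ≤ 1 / 6)
    (hy : |lam * y| ≤ 1 / 6) (z : ℝ) :
    6⁻¹ * ((ξ ^ 2 + y ^ 2) ^ 2 + 4 * z ^ 2) ≤ Gfun lam (ξ, y, z) ∧
      Gfun lam (ξ, y, z) ≤ 6 * ((ξ ^ 2 + y ^ 2) ^ 2 + 4 * z ^ 2) := by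
  have hμ : 0 < lam ^ 2 := by positivity
  obtain ⟨hA₁, hA₂⟩ := cosh_sub_cos_bounds hξ hy
  obtain ⟨hS₁, hS₂⟩ := sq_add_sq_comparable_of_approx (A := cosh (lam * y) - cos (lam * ξ))
    (r := ξ ^ 2 + y ^ 2) (z := z) hμ.le (by positivity) (by linarith) (by linarith)
    (abs_shc_mul_sub_sq_le hy) (sin_sub_shc_mul_sq_le hξ (by linarith))
  obtain ⟨he₁, he₂⟩ := exp_mem_Icc_of_abs_le (u := 2 * (lam * y)) (by
    rw [abs_mul, abs_two]; linarith)
  rw [Gfun_eq, div_mul_eq_mul_div, le_div_iff₀ (by positivity), div_le_iff₀ (by positivity)]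
  constructor
  · nlinarith [mul_le_mul he₁ hS₁ (by positivity) (exp_pos _).le]
  · nlinarith [mul_le_mul he₂ hS₂ (by positivity) (by norm_num)]

/-- Two-sided comparison of `G` with the fourth power of the homogeneous gauge:
there are `K ≥ 1` and a neighborhood of the origin on which
`K⁻¹((ξ²+y²)² + 4z²) ≤ G(ξ,y,z) ≤ K((ξ²+y²)² + 4z²)`. -/
theorem Gfun_comparable (lam : ℝ) (hlam : lam ≠ 0) :
    ∃ K : ℝ, 1 ≤ K ∧ ∃ ε > (0 : ℝ), ∀ ξ y z : ℝ,
      |ξ| < ε → |y| < ε → |z| < ε →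
        K⁻¹ * ((ξ ^ 2 + y ^ 2) ^ 2 + 4 * z ^ 2) ≤ Gfun lam (ξ, y, z) ∧
        Gfun lam (ξ, y, z) ≤ K * ((ξ ^ 2 + y ^ 2) ^ 2 + 4 * z ^ 2) := by
  have hlam' : 0 < |lam| := abs_pos.mpr hlam
  have small : ∀ u : ℝ, |u| < (6 * |lam|)⁻¹ → |lam * u| ≤ 1 / 6 := fun u hu => by
    rw [abs_mul]
    calc |lam| * |u| ≤ |lam| * (6 * |lam|)⁻¹ := by gcongr
      _ = 1 / 6 := by field_simp
  refine ⟨6, by norm_num, (6 * |lam|)⁻¹, by positivity, fun ξ y z hξ hy _ => ?_⟩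
  exact Gfun_comparable_of_abs_mul_le hlam (small ξ hξ) (small y hy) z
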